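/- Let G be a group of order d acting edge-freely on a finite graph Y with quotient graph of groups 𝕏, and let 𝔮 be a prime of 𝕏. Then G acts transitively on the primes of Y lying over 𝔮, and the number of such primes is d/f(𝔮), where f(𝔮) is the order of the Frobenius element of any representative of 𝔮. -/

import Mathlib

/-!
A path of `Y` lying over the rotation of `Q` by `t` is determined by the sheet `s` of its first
half-edge: the group labels of its image force the `j`-th half-edge onto the sheet
`s · F(Q_{<j})`, a partial Frobenius product. Conversely these lifts close up after `n = f·m`
steps because the Frobenius elements of all rotations of `Q` are conjugate to `F(Q)`, hence of
order `f`; they are closed, reduced and primitive, and `(s, t) ↦ lift s t` is injective because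
`Q` is primitive. So the paths over `𝔮` are parametrised by `G × ℤ/m`, with `G` acting on the sheet
and rotation by `τ` acting as `(s, t) ↦ (s · F(Q_{<τ}), t + τ)`; this gives transitivity, and since
rotation acts freely on primitive paths there are `|G|·m / n = |G| / f` rotation classes.
-/

structure LegGraph where
  V : Type
  H : Type
  [fV : Fintype V]
  [fH : Fintype H]
  [dV : DecidableEq V]
  [dH : DecidableEq H]
  r : H → V
  bar : H → H
  bar_bar : ∀ h, bar (bar h) = h

attribute [instance] LegGraph.fV LegGraph.fH LegGraph.dV LegGraph.dH

namespace LegGraph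

def IsClosedPath (X : LegGraph) {n : ℕ} (h : ZMod n → X.H) : Prop :=
  ∀ j, X.r (h (j + 1)) = X.r (X.bar (h j))

def IsReducedPath (X : LegGraph) {n : ℕ} (h : ZMod n → X.H) : Prop :=
  ∀ j, h (j + 1) ≠ X.bar (h j)

def HasPeriod (X : LegGraph) {n : ℕ} (h : ZMod n → X.H) (d : ℕ) : Prop :=
  ∀ j, h (j + (d : ZMod n)) = h j

def IsPrimitive (X : LegGraph) {n : ℕ} (h : ZMod n → X.H) : Prop :=
  ∀ d : ℕ, 0 < d → d ∣ n → X.HasPeriod h d → d = n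

end LegGraph

/-- An edge-free Galois covering of graphs with legs: a group `G` acting on a finite
graph `Y`, freely on half-edges, together with the quotient graph `X = Y/G`, a lifted
spanning tree (recorded via the vertex section `vT`), a choice of identity sheet
(recorded via the half-edge section `sec`) and the Frobenius elements `F(h)`, as in
the construction of the quotient graph of groups `𝕏 = Y ⫽ G`. -/
structure EdgeFreeCover where
  Y : LegGraph
  G : Type
  [grpG : Group G]
  [finG : Fintype G]
  [decG : DecidableEq G]
  act : G → Y.H → Y.H
  actV : G → Y.V → Y.V
  act_one : ∀ h, act 1 h = h
  act_mul : ∀ g g' h, act (g * g') h = act g (act g' h)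
  actV_one : ∀ v, actV 1 v = v
  actV_mul : ∀ g g' v, actV (g * g') v = actV g (actV g' v)
  act_r : ∀ g h, Y.r (act g h) = actV g (Y.r h)
  act_bar : ∀ g h, Y.bar (act g h) = act g (Y.bar h)
  free : ∀ g h, act g h = h → g = 1
  X : LegGraph
  πV : Y.V → X.V
  πH : Y.H → X.H
  πV_surj : Function.Surjective πV
  πH_r : ∀ f, X.r (πH f) = πV (Y.r f)
  πH_bar : ∀ f, X.bar (πH f) = πH (Y.bar f)
  πH_eq : ∀ f f', πH f = πH f' ↔ ∃ g, act g f = f'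
  πV_eq : ∀ v v', πV v = πV v' ↔ ∃ g, actV g v = v'
  vT : X.V → Y.V
  vT_sec : ∀ v, πV (vT v) = v
  sec : X.H → Y.H
  sec_sec : ∀ h, πH (sec h) = h
  sec_root : ∀ h, Y.r (sec h) = vT (X.r h)
  F : X.H → G
  F_bar : ∀ h, F (X.bar h) = (F h)⁻¹
  F_spec : ∀ h, act (F h) (sec (X.bar h)) = Y.bar (sec h)

attribute [instance] EdgeFreeCover.grpG EdgeFreeCover.finG EdgeFreeCover.decG

namespace EdgeFreeCover

variable (E : EdgeFreeCover)

/-- The sheet number `N(f)` of a half-edge `f` of `Y`: the unique `g ∈ G` with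
`g · (π f)^S = f`. -/
noncomputable def N (f : E.Y.H) : E.G :=
  Classical.choose ((E.πH_eq (E.sec (E.πH f)) f).mp (E.sec_sec (E.πH f)))

/-- Membership in the vertex group `X_v` of the quotient graph of groups:
the stabilizer of the chosen lift `v^T`. -/
def InStab (v : E.X.V) (g : E.G) : Prop := E.actV g (E.vT v) = E.vT v

/-- A closed path of length `n` in the quotient graph of groups `𝕏 = Y ⫽ G`,
recorded cyclically: half-edges `h j` and group elements `γ j` (with `γ j` the group
element immediately preceding `h j`), each lying in the vertex group at the root of
`h j`. -/
def IsClosedGPath {n : ℕ} (h : ZMod n → E.X.H) (γ : ZMod n → E.G) : Prop :=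
  E.X.IsClosedPath h ∧ ∀ j, E.InStab (E.X.r (h j)) (γ j)

/-- The path `g₀h₁g₁⋯g_{n-1}h_n` is reduced if for every `j` either `h_{j+1} ≠ h̄_j`
or the intervening group element is nontrivial. -/
def IsReducedGPath {n : ℕ} (h : ZMod n → E.X.H) (γ : ZMod n → E.G) : Prop :=
  ∀ j, h (j + 1) ≠ E.X.bar (h j) ∨ γ (j + 1) ≠ 1

/-- A closed path in `𝕏` has period `d` if it is invariant under rotation by `d`. -/
def GPathHasPeriod {n : ℕ} (h : ZMod n → E.X.H) (γ : ZMod n → E.G) (d : ℕ) : Prop :=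
  ∀ j, h (j + (d : ZMod n)) = h j ∧ γ (j + (d : ZMod n)) = γ j

/-- A closed path in `𝕏` is primitive if it is not a proper power. -/
def GPathIsPrimitive {n : ℕ} (h : ZMod n → E.X.H) (γ : ZMod n → E.G) : Prop :=
  ∀ d : ℕ, 0 < d → d ∣ n → E.GPathHasPeriod h γ d → d = n

/-- The Frobenius element `F(P) = g₀F(h₁)g₁F(h₂)⋯g_{n-1}F(h_n)` of a closed path
in `𝕏` (with chosen basepoint). -/
def Frob {n : ℕ} (h : ZMod n → E.X.H) (γ : ZMod n → E.G) : E.G :=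
  (((List.range n).map fun i => γ (i : ZMod n) * E.F (h (i : ZMod n)))).prod

/-- The lift `π⁻¹(Q, s)` of a closed path `Q` in `𝕏` starting on the `s`-th sheet:
its `j`-th half-edge is `s · F(g₀h₁⋯h_j g_j) · h_{j+1}^S`. -/
def liftPath {n : ℕ} (h : ZMod n → E.X.H) (γ : ZMod n → E.G) (s : E.G)
    (j : ZMod n) : E.Y.H :=
  E.act (s * (((List.range j.val).map fun i => γ (i : ZMod n) * E.F (h (i : ZMod n)))).prod
      * γ j) (E.sec (h j))

/-- The half-edge components of the image `π(P)` of a closed path `P` in `Y`. -/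
def imgH {n : ℕ} (f : ZMod n → E.Y.H) (j : ZMod n) : E.X.H := E.πH (f j)

/-- The group components of the image `π(P)` of a closed path `P` in `Y`:
`g_j = F(h_j)⁻¹ N(f_j)⁻¹ N(f_{j+1})` (cyclically, with `g₀ = F(h_n)⁻¹N(f_n)⁻¹N(f₁)`). -/
noncomputable def imgG {n : ℕ} (f : ZMod n → E.Y.H) (j : ZMod n) : E.G :=
  (E.F (E.πH (f (j - 1))))⁻¹ * (E.N (f (j - 1)))⁻¹ * E.N (f j)

end EdgeFreeCover

/-- A primitive closed reduced path `P` of length `n` in `Y` lies over the prime of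
`𝕏` represented by `Q = (h, γ)` of length `m ∣ n` if the image `π(P)` equals `R^(n/m)`
for some rotation `R` of `Q`. -/
def LiesOver (E : EdgeFreeCover) {n m : ℕ} (hdvd : m ∣ n)
    (P : ZMod n → E.Y.H) (h : ZMod m → E.X.H) (γ : ZMod m → E.G) : Prop :=
  ∃ t : ZMod m, ∀ j : ZMod n,
    E.imgH P j = h (ZMod.castHom hdvd (ZMod m) j + t) ∧
    E.imgG P j = γ (ZMod.castHom hdvd (ZMod m) j + t)

lemma ZMod.induction_add_one {n : ℕ} [NeZero n] {p : ZMod n → Prop} (zero : p 0)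
    (add_one : ∀ j, p j → p (j + 1)) (j : ZMod n) : p j := by
  have hnat (k : ℕ) : p k := by
    induction k with
    | zero => simpa using zero
    | succ k ih => simpa using add_one _ ih
  simpa using hnat j.val

section Periods

variable {α : Type*} {k : ℕ}

def periods (p : ZMod k → α) : AddSubgroup (ZMod k) where
  carrier := {x | ∀ j, p (j + x) = p j}
  zero_mem' j := by rw [add_zero]
  add_mem' ha hb j := by rw [← add_assoc, hb, ha]
  neg_mem' {a} ha j := by simpa [sub_eq_add_neg] using (ha (j - a)).symm

lemma natCast_gcd_mem_periods [NeZero k] {p : ZMod k → α} {x : ZMod k} (hx : x ∈ periods p) :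
    (Nat.gcd x.val k : ZMod k) ∈ periods p := by
  have hbezout : (Nat.gcd x.val k : ZMod k) = Nat.gcdA x.val k • x := by
    have := congrArg (fun z : ℤ => (z : ZMod k)) (Nat.gcd_eq_gcd_ab x.val k)
    push_cast at this
    rw [this, ZMod.natCast_self, zero_mul, add_zero, ZMod.natCast_zmod_val, zsmul_eq_mul, mul_comm]
  rw [hbezout]
  exact AddSubgroup.zsmul_mem _ hx _

lemma eq_zero_of_forall_add_eq (hk : 0 < k) {p : ZMod k → α}
    (hprim : ∀ d : ℕ, 0 < d → d ∣ k → (∀ j, p (j + d) = p j) → d = k)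
    {x : ZMod k} (hx : ∀ j, p (j + x) = p j) : x = 0 := by
  have : NeZero k := ⟨hk.ne'⟩
  have hgcd : Nat.gcd x.val k = k :=
    hprim _ (Nat.gcd_pos_of_pos_right _ hk) (Nat.gcd_dvd_right _ _) (natCast_gcd_mem_periods hx)
  by_contra hx0
  have hpos : 0 < x.val := Nat.pos_of_ne_zero ((ZMod.val_ne_zero x).2 hx0)
  have hle := Nat.le_of_dvd hpos (Nat.gcd_dvd_left x.val k)
  rw [hgcd] at hle
  exact (ZMod.val_lt x).not_ge hle

end Periods

lemma AddAction.card_eq_card_orbitRel_quotient_mul_of_free {A X : Type*} [AddGroup A]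
    [AddAction A X] [Finite A] [Finite X] (hfree : ∀ (a : A) (x : X), a +ᵥ x = x → a = 0) :
    Nat.card X = Nat.card (orbitRel.Quotient A X) * Nat.card A := by
  have : Fintype (orbitRel.Quotient A X) := Fintype.ofFinite _
  have horbit (x : X) : Nat.card (orbit A x) = Nat.card A := by
    have hstab : stabilizer A x = ⊥ := (AddSubgroup.eq_bot_iff_forall _).2 (hfree · x)
    rw [← Nat.card_congr (orbitProdStabilizerEquivAddGroup A x), Nat.card_prod, hstab,
      AddSubgroup.card_bot, mul_one]
  rw [Nat.card_congr (selfEquivSigmaOrbits A X), Nat.card_sigma]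
  simp [horbit, Nat.card_eq_fintype_card]

section Rotation

variable {β : Type*} {n : ℕ} (S : (ZMod n → β) → Prop)

abbrev rotationAction (hS : ∀ P τ, S P → S fun j => P (j + τ)) :
    AddAction (ZMod n) {P // S P} where
  vadd τ P := ⟨fun j => P.1 (j + τ), hS _ _ P.2⟩
  zero_vadd P := Subtype.ext <| funext fun j => congrArg P.1 (add_zero j)
  add_vadd a b P := Subtype.ext <| funext fun j => congrArg P.1 (add_assoc j a b).symm

lemma card_quot_rotate_mul [Finite β] (hn : 0 < n) (hS : ∀ P τ, S P → S fun j => P (j + τ))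
    (hfree : ∀ P, S P → ∀ x : ZMod n, (∀ j, P (j + x) = P j) → x = 0) :
    Nat.card (Quot fun P P' : {P // S P} => ∃ t : ZMod n, ∀ j, P'.1 j = P.1 (j + t)) * n
      = Nat.card {P // S P} := by
  have : NeZero n := ⟨hn.ne'⟩
  let _ := rotationAction S hS
  rw [AddAction.card_eq_card_orbitRel_quotient_mul_of_free (A := ZMod n) (X := {P // S P}),
    Nat.card_zmod]
  · refine congrArg (· * n) (Nat.card_congr (Quot.congrRight fun P P' => ?_))
    rw [AddAction.orbitRel_apply, AddAction.mem_orbit_symm, AddAction.mem_orbit_iff]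
    refine exists_congr fun t => ⟨fun h => (Subtype.ext (funext h)).symm, fun h j => ?_⟩
    rw [← h]
    rfl
  · intro τ P hP
    exact hfree P.1 P.2 τ fun j => congrFun (congrArg Subtype.val hP) j

end Rotation

namespace EdgeFreeCover

variable (E : EdgeFreeCover)

lemma eq_of_act_eq_act {a b : E.G} {y : E.Y.H} (hab : E.act a y = E.act b y) : a = b := by
  have hfix : E.act (b⁻¹ * a) y = y := by
    rw [E.act_mul, hab, ← E.act_mul, inv_mul_cancel, E.act_one]
  exact (inv_mul_eq_one.mp (E.free _ _ hfix)).symm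

lemma πH_act (g : E.G) (y : E.Y.H) : E.πH (E.act g y) = E.πH y :=
  (E.πH_eq _ _).mpr ⟨g⁻¹, by rw [← E.act_mul, inv_mul_cancel, E.act_one]⟩

lemma act_N_sec (y : E.Y.H) : E.act (E.N y) (E.sec (E.πH y)) = y :=
  Classical.choose_spec ((E.πH_eq (E.sec (E.πH y)) y).mp (E.sec_sec (E.πH y)))

lemma N_act_sec (g : E.G) (x : E.X.H) : E.N (E.act g (E.sec x)) = g := by
  apply E.eq_of_act_eq_act (y := E.sec x)
  conv_rhs => rw [← E.act_N_sec (E.act g (E.sec x))]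
  rw [E.πH_act, E.sec_sec]

lemma eq_of_πH_eq_of_N_eq {y y' : E.Y.H} (hπ : E.πH y = E.πH y') (hN : E.N y = E.N y') :
    y = y' := by
  rw [← E.act_N_sec y, ← E.act_N_sec y', hπ, hN]

lemma r_act_sec (g : E.G) (x : E.X.H) :
    E.Y.r (E.act g (E.sec x)) = E.actV g (E.vT (E.X.r x)) := by
  rw [act_r, sec_root]

lemma bar_act_sec (g : E.G) (x : E.X.H) :
    E.Y.bar (E.act g (E.sec x)) = E.act (g * E.F x) (E.sec (E.X.bar x)) := by
  rw [act_bar, ← F_spec, ← act_mul]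

variable {m n : ℕ} (h : ZMod m → E.X.H) (γ : ZMod m → E.G)

/-- Consecutive half-edges of a lift of `Q` lie on sheets differing by `F(h_x) γ_{x+1}`. -/
def sheetStep (x : ZMod m) : E.G := E.F (h x) * γ (x + 1)

/-- The Frobenius element of the first `k` steps of the rotation of `Q` by `t`, with each group
label moved behind the preceding half-edge. -/
def partialFrob (t : ZMod m) (k : ℕ) : E.G :=
  ((List.range k).map fun i : ℕ => E.sheetStep h γ (i + t)).prod

@[simp]
lemma partialFrob_zero (t : ZMod m) : E.partialFrob h γ t 0 = 1 := rfl

lemma partialFrob_succ (t : ZMod m) (k : ℕ) :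
    E.partialFrob h γ t (k + 1) = E.partialFrob h γ t k * E.sheetStep h γ (k + t) :=
  List.prod_range_succ _ _

lemma partialFrob_add (t : ZMod m) (a b : ℕ) :
    E.partialFrob h γ t (a + b) = E.partialFrob h γ t a * E.partialFrob h γ (a + t) b := by
  induction b with
  | zero => simp
  | succ b ih =>
    rw [← add_assoc, partialFrob_succ, ih, partialFrob_succ, mul_assoc]
    push_cast
    rw [add_assoc, add_left_comm (a : ZMod m)]

lemma partialFrob_mul_of_natCast_eq_zero (t : ZMod m) {c : ℕ} (hc : (c : ZMod m) = 0)
    (a : ℕ) : E.partialFrob h γ t (c * a) = E.partialFrob h γ t c ^ a := by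
  induction a with
  | zero => simp
  | succ a ih =>
    have hshift : ((c * a : ℕ) : ZMod m) + t = t := by push_cast; rw [hc, zero_mul, zero_add]
    rw [Nat.mul_succ, partialFrob_add, ih, hshift, pow_succ]

lemma partialFrob_val_natCast (hdvd : m ∣ n) {t : ZMod m} (hF : E.partialFrob h γ t n = 1)
    (k : ℕ) : E.partialFrob h γ t (k : ZMod n).val = E.partialFrob h γ t k := by
  have hn : (n : ZMod m) = 0 := (ZMod.natCast_eq_zero_iff n m).2 hdvd
  have hshift : ((n * (k / n) : ℕ) : ZMod m) + t = t := by
    push_cast; rw [hn, zero_mul, zero_add]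
  conv_rhs => rw [← Nat.div_add_mod k n]
  rw [ZMod.val_natCast, partialFrob_add, partialFrob_mul_of_natCast_eq_zero _ _ _ _ hn, hF,
    one_pow, one_mul, hshift]

lemma partialFrob_val_add [NeZero n] (hdvd : m ∣ n) {t : ZMod m}
    (hF : E.partialFrob h γ t n = 1) (j τ : ZMod n) :
    E.partialFrob h γ t (j + τ).val
      = E.partialFrob h γ t τ.val * E.partialFrob h γ (ZMod.castHom hdvd (ZMod m) τ + t) j.val := by
  have hsum : j + τ = ((τ.val + j.val : ℕ) : ZMod n) := by
    push_cast; rw [ZMod.natCast_zmod_val, ZMod.natCast_zmod_val, add_comm]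
  rw [hsum, E.partialFrob_val_natCast h γ hdvd hF, partialFrob_add, ZMod.castHom_apply,
    ZMod.natCast_val]

lemma partialFrob_val_add_one [NeZero n] (hdvd : m ∣ n) {t : ZMod m}
    (hF : E.partialFrob h γ t n = 1) (j : ZMod n) :
    E.partialFrob h γ t (j + 1).val
      = E.partialFrob h γ t j.val * E.sheetStep h γ (ZMod.castHom hdvd (ZMod m) j + t) := by
  have hsucc : j + 1 = ((j.val + 1 : ℕ) : ZMod n) := by
    push_cast; rw [ZMod.natCast_zmod_val]
  rw [hsucc, E.partialFrob_val_natCast h γ hdvd hF, partialFrob_succ, ZMod.castHom_apply,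
    ZMod.natCast_val]

lemma γ_mul_partialFrob (k : ℕ) :
    γ 0 * E.partialFrob h γ 0 k
      = ((List.range k).map fun i : ℕ => γ i * E.F (h i)).prod * γ k := by
  induction k with
  | zero => simp
  | succ k ih =>
    rw [partialFrob_succ, ← mul_assoc, ih, List.prod_range_succ, sheetStep, add_zero]
    push_cast
    simp only [mul_assoc]

lemma partialFrob_eq_conj_frob [NeZero m] :
    E.partialFrob h γ 0 m = (γ 0)⁻¹ * E.Frob h γ * γ 0 := by
  have := E.γ_mul_partialFrob h γ m
  rw [ZMod.natCast_self] at this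
  have hFrob : E.Frob h γ = ((List.range m).map fun i : ℕ => γ i * E.F (h i)).prod := by
    simp [Frob, ← List.map_eq_flatMap, Function.comp_def]
  rw [hFrob, mul_assoc, ← this, inv_mul_cancel_left]

lemma partialFrob_eq_conj [NeZero m] (t : ZMod m) :
    E.partialFrob h γ t m
      = (E.partialFrob h γ 0 t.val)⁻¹ * E.partialFrob h γ 0 m * E.partialFrob h γ 0 t.val := by
  have h1 := E.partialFrob_add h γ 0 t.val m
  have h2 := E.partialFrob_add h γ 0 m t.val
  rw [add_zero, ZMod.natCast_zmod_val] at h1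
  rw [add_zero, ZMod.natCast_self, add_comm, h1] at h2
  rw [mul_assoc, ← h2, inv_mul_cancel_left]

lemma orderOf_partialFrob [NeZero m] (t : ZMod m) :
    orderOf (E.partialFrob h γ t m) = orderOf (E.Frob h γ) := by
  have orderOf_conj (a x : E.G) : orderOf (a⁻¹ * x * a) = orderOf x :=
    SemiconjBy.orderOf_eq a (by simp [SemiconjBy, mul_assoc])
  rw [partialFrob_eq_conj, partialFrob_eq_conj_frob, orderOf_conj, orderOf_conj]

lemma partialFrob_eq_one [NeZero m] (hn : n = orderOf (E.Frob h γ) * m) (t : ZMod m) :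
    E.partialFrob h γ t n = 1 := by
  rw [hn, mul_comm, partialFrob_mul_of_natCast_eq_zero _ _ _ _ (ZMod.natCast_self m),
    ← orderOf_partialFrob, pow_orderOf_eq_one]

variable (hdvd : m ∣ n)

/-- The lift of the rotation of `Q` by `t` whose first half-edge lies on sheet `s`. -/
def lift (s : E.G) (t : ZMod m) (j : ZMod n) : E.Y.H :=
  E.act (s * E.partialFrob h γ t j.val) (E.sec (h (ZMod.castHom hdvd (ZMod m) j + t)))

variable {h γ hdvd}

lemma πH_lift (s : E.G) (t : ZMod m) (j : ZMod n) :
    E.πH (E.lift h γ hdvd s t j) = h (ZMod.castHom hdvd (ZMod m) j + t) := by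
  rw [lift, πH_act, sec_sec]

lemma N_lift (s : E.G) (t : ZMod m) (j : ZMod n) :
    E.N (E.lift h γ hdvd s t j) = s * E.partialFrob h γ t j.val :=
  E.N_act_sec _ _

lemma act_lift (g s : E.G) (t : ZMod m) (j : ZMod n) :
    E.act g (E.lift h γ hdvd s t j) = E.lift h γ hdvd (g * s) t j := by
  rw [lift, lift, ← E.act_mul, mul_assoc]

lemma lift_add [NeZero n] {t : ZMod m} (hF : E.partialFrob h γ t n = 1) (s : E.G)
    (j τ : ZMod n) :
    E.lift h γ hdvd s t (j + τ)
      = E.lift h γ hdvd (s * E.partialFrob h γ t τ.val) (ZMod.castHom hdvd (ZMod m) τ + t) j := by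
  rw [lift, lift, E.partialFrob_val_add h γ hdvd hF, map_add, ← mul_assoc, add_assoc]

lemma N_lift_add_one [NeZero n] {t : ZMod m} (hF : E.partialFrob h γ t n = 1) (s : E.G)
    (j : ZMod n) :
    E.N (E.lift h γ hdvd s t (j + 1))
      = E.N (E.lift h γ hdvd s t j) * E.sheetStep h γ (ZMod.castHom hdvd (ZMod m) j + t) := by
  rw [N_lift, N_lift, E.partialFrob_val_add_one h γ hdvd hF, mul_assoc]

lemma imgG_lift [NeZero n] {t : ZMod m} (hF : E.partialFrob h γ t n = 1) (s : E.G)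
    (j : ZMod n) :
    E.imgG (E.lift h γ hdvd s t) j = γ (ZMod.castHom hdvd (ZMod m) j + t) := by
  obtain ⟨i, rfl⟩ : ∃ i, j = i + 1 := ⟨j - 1, (sub_add_cancel j 1).symm⟩
  rw [imgG, add_sub_cancel_right, E.N_lift_add_one hF, πH_lift, sheetStep, map_add, map_one,
    add_right_comm]
  group

lemma liesOver_lift [NeZero n] {t : ZMod m} (hF : E.partialFrob h γ t n = 1) (s : E.G) :
    LiesOver E hdvd (E.lift h γ hdvd s t) h γ :=
  ⟨t, fun j => ⟨E.πH_lift s t j, E.imgG_lift hF s j⟩⟩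

lemma lift_add_one [NeZero n] {t : ZMod m} (hF : E.partialFrob h γ t n = 1) (s : E.G)
    (j : ZMod n) :
    E.lift h γ hdvd s t (j + 1)
      = E.act (s * E.partialFrob h γ t j.val * E.sheetStep h γ (ZMod.castHom hdvd (ZMod m) j + t))
          (E.sec (h (ZMod.castHom hdvd (ZMod m) j + t + 1))) := by
  rw [lift, E.partialFrob_val_add_one h γ hdvd hF, map_add, map_one, add_right_comm, mul_assoc]

lemma isClosedPath_lift [NeZero n] (hQc : E.IsClosedGPath h γ) {t : ZMod m}
    (hF : E.partialFrob h γ t n = 1) (s : E.G) :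
    E.Y.IsClosedPath (E.lift h γ hdvd s t) := by
  intro j
  set x := ZMod.castHom hdvd (ZMod m) j + t
  rw [E.lift_add_one hF, lift, bar_act_sec, r_act_sec, r_act_sec, ← hQc.1 x, sheetStep,
    ← mul_assoc, actV_mul, hQc.2 (x + 1)]

lemma isReducedPath_lift [NeZero n] (hQr : E.IsReducedGPath h γ) {t : ZMod m}
    (hF : E.partialFrob h γ t n = 1) (s : E.G) :
    E.Y.IsReducedPath (E.lift h γ hdvd s t) := by
  intro j hback
  set x := ZMod.castHom hdvd (ZMod m) j + t
  rw [E.lift_add_one hF, lift, bar_act_sec] at hback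
  have hbar : h (x + 1) = E.X.bar (h x) := by
    simpa only [πH_act, sec_sec] using congrArg E.πH hback
  refine (hQr x).resolve_left (not_not.2 hbar) ?_
  rw [hbar, sheetStep, ← mul_assoc] at hback
  exact mul_eq_left.1 (E.eq_of_act_eq_act hback)

lemma eq_lift [NeZero n] {t : ZMod m} (hF : E.partialFrob h γ t n = 1) {P : ZMod n → E.Y.H}
    (hP : ∀ j, E.imgH P j = h (ZMod.castHom hdvd (ZMod m) j + t) ∧
      E.imgG P j = γ (ZMod.castHom hdvd (ZMod m) j + t)) :
    P = E.lift h γ hdvd (E.N (P 0)) t := by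
  have hN : ∀ j, E.N (P j) = E.N (E.lift h γ hdvd (E.N (P 0)) t j) := by
    refine ZMod.induction_add_one (by rw [N_lift, ZMod.val_zero, partialFrob_zero, mul_one])
      fun j hj => ?_
    have hstep := (hP (j + 1)).2
    rw [imgG, add_sub_cancel_right, ← imgH, (hP j).1, map_add, map_one, add_right_comm] at hstep
    rw [E.N_lift_add_one hF, ← hj, sheetStep, ← hstep]
    group
  exact funext fun j => E.eq_of_πH_eq_of_N_eq ((hP j).1.trans (E.πH_lift _ _ j).symm) (hN j)

lemma eq_zero_of_gPathIsPrimitive [NeZero m] (hQp : E.GPathIsPrimitive h γ) {x : ZMod m}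
    (hx : ∀ y, h (y + x) = h y ∧ γ (y + x) = γ y) : x = 0 :=
  eq_zero_of_forall_add_eq (p := fun y => (h y, γ y)) (Nat.pos_of_neZero m)
    (fun d hd hdm hper => hQp d hd hdm fun y => Prod.ext_iff.1 (hper y))
    (fun y => Prod.ext (hx y).1 (hx y).2)

lemma lift_injective [NeZero m] [NeZero n] (hQp : E.GPathIsPrimitive h γ)
    (hF : ∀ t, E.partialFrob h γ t n = 1) {s s' : E.G} {t t' : ZMod m}
    (heq : E.lift h γ hdvd s t = E.lift h γ hdvd s' t') : s = s' ∧ t = t' := by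
  have ht : t = t' := by
    refine sub_eq_zero.1 (E.eq_zero_of_gPathIsPrimitive hQp fun y => ?_)
    obtain ⟨j, hj⟩ := ZMod.castHom_surjective hdvd (y - t')
    have hy : y + (t - t') = ZMod.castHom hdvd (ZMod m) j + t := by rw [hj]; ring
    have hy' : y = ZMod.castHom hdvd (ZMod m) j + t' := by rw [hj]; ring
    have hπ := congrArg E.πH (congrFun heq j)
    have hγ := congrArg (E.imgG · j) heq
    rw [πH_lift, πH_lift] at hπ
    simp only [E.imgG_lift (hF _)] at hγ
    rw [hy, hy']
    exact ⟨hπ, hγ⟩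
  subst ht
  have h0 := congrArg E.N (congrFun heq 0)
  rw [N_lift, N_lift, mul_right_cancel_iff] at h0
  exact ⟨h0, rfl⟩

lemma isPrimitive_lift [NeZero m] [NeZero n] (hQp : E.GPathIsPrimitive h γ)
    (hn : n = orderOf (E.Frob h γ) * m) (s : E.G) (t : ZMod m) :
    E.Y.IsPrimitive (E.lift h γ hdvd s t) := by
  have hF := E.partialFrob_eq_one h γ hn
  intro d _ hdn hper
  have hrot : E.lift h γ hdvd (s * E.partialFrob h γ t (d : ZMod n).val)
      (ZMod.castHom hdvd (ZMod m) d + t) = E.lift h γ hdvd s t :=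
    funext fun j => (E.lift_add (hF t) s j d).symm.trans (hper j)
  obtain ⟨hs, ht⟩ := E.lift_injective hQp hF hrot
  rw [map_natCast, add_eq_right, ZMod.natCast_eq_zero_iff] at ht
  obtain ⟨k, rfl⟩ := ht
  rw [mul_eq_left, E.partialFrob_val_natCast h γ hdvd (hF t),
    partialFrob_mul_of_natCast_eq_zero _ _ _ _ (ZMod.natCast_self m)] at hs
  have hk : orderOf (E.Frob h γ) ∣ k :=
    E.orderOf_partialFrob h γ t ▸ orderOf_dvd_of_pow_eq_one hs
  refine Nat.dvd_antisymm hdn ?_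
  rw [hn, mul_comm]
  exact Nat.mul_dvd_mul_left m hk

lemma exists_act_rotate_eq [NeZero n] (hF : ∀ t, E.partialFrob h γ t n = 1)
    {P P' : ZMod n → E.Y.H} (hP : LiesOver E hdvd P h γ) (hP' : LiesOver E hdvd P' h γ) :
    ∃ (g : E.G) (τ : ZMod n), ∀ j, E.act g (P (j + τ)) = P' j := by
  obtain ⟨t, hPt⟩ := hP
  obtain ⟨t', hPt'⟩ := hP'
  rw [E.eq_lift (hF t) hPt, E.eq_lift (hF t') hPt']
  obtain ⟨τ, hτ⟩ := ZMod.castHom_surjective hdvd (t' - t)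
  refine ⟨E.N (P' 0) * (E.N (P 0) * E.partialFrob h γ t τ.val)⁻¹, τ, fun j => ?_⟩
  rw [E.lift_add (hF t), act_lift, hτ, sub_add_cancel, inv_mul_cancel_right]

variable (h γ hdvd)

/-- The paths whose rotation classes are the primes of `Y` over the prime represented by `Q`. -/
def IsPathOver (P : ZMod n → E.Y.H) : Prop :=
  E.Y.IsClosedPath P ∧ E.Y.IsReducedPath P ∧ E.Y.IsPrimitive P ∧ LiesOver E hdvd P h γ

variable {h γ hdvd}

lemma isPathOver_iff [NeZero m] [NeZero n] (hQc : E.IsClosedGPath h γ)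
    (hQr : E.IsReducedGPath h γ) (hQp : E.GPathIsPrimitive h γ) (hn : n = orderOf (E.Frob h γ) * m) {P : ZMod n → E.Y.H} :
    E.IsPathOver h γ hdvd P ↔ ∃ s t, E.lift h γ hdvd s t = P := by
  have hF := E.partialFrob_eq_one h γ hn
  constructor
  · rintro ⟨-, -, -, t, hPt⟩
    exact ⟨_, t, (E.eq_lift (hF t) hPt).symm⟩
  · rintro ⟨s, t, rfl⟩
    exact ⟨E.isClosedPath_lift hQc (hF t) s, E.isReducedPath_lift hQr (hF t) s,
      E.isPrimitive_lift hQp hn s t, E.liesOver_lift (hF t) s⟩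

lemma isPathOver_rotate [NeZero m] [NeZero n] (hQc : E.IsClosedGPath h γ)
    (hQr : E.IsReducedGPath h γ) (hQp : E.GPathIsPrimitive h γ)
    (hn : n = orderOf (E.Frob h γ) * m) {P : ZMod n → E.Y.H} (hP : E.IsPathOver h γ hdvd P)
    (τ : ZMod n) : E.IsPathOver h γ hdvd fun j => P (j + τ) := by
  obtain ⟨s, t, rfl⟩ := (E.isPathOver_iff hQc hQr hQp hn).1 hP
  exact (E.isPathOver_iff hQc hQr hQp hn).2
    ⟨_, _, funext fun j => (E.lift_add (E.partialFrob_eq_one h γ hn t) s j τ).symm⟩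

lemma card_isPathOver [NeZero m] [NeZero n] (hQc : E.IsClosedGPath h γ)
    (hQr : E.IsReducedGPath h γ) (hQp : E.GPathIsPrimitive h γ)
    (hn : n = orderOf (E.Frob h γ) * m) :
    Nat.card {P // E.IsPathOver h γ hdvd P} = Fintype.card E.G * m := by
  have hiff (P : ZMod n → E.Y.H) := E.isPathOver_iff (hdvd := hdvd) (P := P) hQc hQr hQp hn
  let e : E.G × ZMod m ≃ {P // E.IsPathOver h γ hdvd P} :=
    Equiv.ofBijective (fun st => ⟨E.lift h γ hdvd st.1 st.2, (hiff _).2 ⟨st.1, st.2, rfl⟩⟩)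
      ⟨fun st st' heq => Prod.ext_iff.2 (E.lift_injective hQp (E.partialFrob_eq_one h γ hn)
          (congrArg Subtype.val heq)),
        fun P => by
          obtain ⟨s, t, hst⟩ := (hiff _).1 P.2
          exact ⟨(s, t), Subtype.ext hst⟩⟩
  rw [← Nat.card_congr e, Nat.card_prod, Nat.card_eq_fintype_card, Nat.card_zmod]

lemma card_quot_rotate_isPathOver_mul [NeZero m] [NeZero n] (hQc : E.IsClosedGPath h γ)
    (hQr : E.IsReducedGPath h γ) (hQp : E.GPathIsPrimitive h γ)
    (hn : n = orderOf (E.Frob h γ) * m) :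
    Nat.card (Quot fun P P' : {P // E.IsPathOver h γ hdvd P} =>
        ∃ t : ZMod n, ∀ j, P'.1 j = P.1 (j + t)) * n = Fintype.card E.G * m :=
  (card_quot_rotate_mul _ (Nat.pos_of_neZero n)
    (fun _ τ hP => E.isPathOver_rotate hQc hQr hQp hn hP τ)
    fun _ hP _ hx => eq_zero_of_forall_add_eq (Nat.pos_of_neZero n) hP.2.2.1 hx).trans
    (E.card_isPathOver hQc hQr hQp hn)

end EdgeFreeCover

/-- Let `G` of order `d` act edge-freely on a finite graph `Y` with
quotient graph of groups `𝕏`, and let `𝔮` be a prime of `𝕏` represented by a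
primitive closed reduced path `Q = (h, γ)` of length `m`, with `f = f(𝔮)` the order of
the Frobenius element `F(Q)`. Then (1) `G` acts transitively on the primes of `Y`
lying over `𝔮` (any two primitive paths over `𝔮` agree after translating by some
`g ∈ G` and rotating), and (2) the number of primes of `Y` over `𝔮` (equivalence
classes, under rotation, of primitive closed reduced paths of length `f·m` lying over
`𝔮`) equals `d / f`. -/
theorem primes_over_transitive_and_count (E : EdgeFreeCover)
    (m : ℕ) (hm : 0 < m)
    (h : ZMod m → E.X.H) (γ : ZMod m → E.G)
    (hQc : E.IsClosedGPath h γ) (hQr : E.IsReducedGPath h γ)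
    (hQp : E.GPathIsPrimitive h γ)
    (f n : ℕ) (hf : f = orderOf (E.Frob h γ)) (hn : n = f * m) (hdvd : m ∣ n) :
    (∀ P P' : ZMod n → E.Y.H,
      E.Y.IsClosedPath P → E.Y.IsReducedPath P → E.Y.IsPrimitive P →
        LiesOver E hdvd P h γ →
      E.Y.IsClosedPath P' → E.Y.IsReducedPath P' → E.Y.IsPrimitive P' →
        LiesOver E hdvd P' h γ →
      ∃ (g : E.G) (t : ZMod n), ∀ j, E.act g (P (j + t)) = P' j) ∧
    Nat.card (Quot (fun (P P' : {P : ZMod n → E.Y.H //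
        E.Y.IsClosedPath P ∧ E.Y.IsReducedPath P ∧ E.Y.IsPrimitive P ∧
          LiesOver E hdvd P h γ}) =>
      ∃ t : ZMod n, ∀ j, P'.1 j = P.1 (j + t))) = Fintype.card E.G / f := by
  have : NeZero m := ⟨hm.ne'⟩
  have hf0 : 0 < f := hf ▸ orderOf_pos _
  have : NeZero n := ⟨by rw [hn]; positivity⟩
  subst hf
  refine ⟨fun P P' _ _ _ hP _ _ _ hP' =>
    E.exists_act_rotate_eq (E.partialFrob_eq_one h γ hn) hP hP', ?_⟩
  obtain ⟨e, he⟩ := orderOf_dvd_card (x := E.Frob h γ)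
  rw [he, Nat.mul_div_cancel_left e hf0]
  refine Nat.eq_of_mul_eq_mul_right (Nat.pos_of_neZero n) ?_
  calc _ = Fintype.card E.G * m := E.card_quot_rotate_isPathOver_mul hQc hQr hQp hn
    _ = e * n := by rw [he, hn]; ring
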